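/- For the square grid graph P_n □ P_n with n ≥ 2, F(P_n □ P_n) = n² − n. -/

import Mathlib

/-!
A failed set grows under forcing to a stalled set `T`, and `T` is stalled exactly when its
complement is a fort: no vertex outside the fort has exactly one neighbour in it. Conversely the
complement of a nonempty fort is failed, so `F(G)` is `|V|` minus the least size of a nonempty
fort. In `Pₙ □ Pₙ` the diagonal is a fort of size `n`. A nonempty fort `W` has at least `n`
vertices: either it meets every row, or an empty row cuts it into two nonempty parts lying
strictly above and below. The columns met by such a part form a nonempty fort of `Pₙ`, and a
nonempty fort of a path contains both ends and misses no two adjacent vertices, hence has at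
least `n / 2` vertices.
-/

namespace ZeroForcing

/-- One step of the zero forcing process: all vertices forced from blue set `S`
(a blue vertex with exactly one white neighbor forces that neighbor). -/
def step {V : Type*} (G : SimpleGraph V) (S : Set V) : Set V :=
  S ∪ {v | ∃ u ∈ S, G.Adj u v ∧ ∀ w, G.Adj u w → w ∉ S → w = v}

/-- `S` is a zero forcing set: iterating the color-change rule makes everything blue. -/
def IsZeroForcingSet {V : Type*} (G : SimpleGraph V) (S : Set V) : Prop :=
  ∃ k, (step G)^[k] S = Set.univ

/-- `S` is a failed zero forcing set. -/
def IsFailedSet {V : Type*} (G : SimpleGraph V) (S : Set V) : Prop :=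
  ¬ IsZeroForcingSet G S

/-- The zero forcing number `Z(G)`. -/
noncomputable def Z {V : Type*} (G : SimpleGraph V) : ℕ :=
  sInf {k | ∃ S : Set V, S.ncard = k ∧ IsZeroForcingSet G S}

/-- The failed zero forcing number `F(G)`. -/
noncomputable def F {V : Type*} (G : SimpleGraph V) : ℕ :=
  sSup {k | ∃ S : Set V, S.ncard = k ∧ IsFailedSet G S}

/-- The strong product of two simple graphs. -/
def strongProd {α β : Type*} (G : SimpleGraph α) (H : SimpleGraph β) :
    SimpleGraph (α × β) where
  Adj x y := x ≠ y ∧ (x.1 = y.1 ∨ G.Adj x.1 y.1) ∧ (x.2 = y.2 ∨ H.Adj x.2 y.2)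
  symm := ⟨by
    rintro x y ⟨h1, h2, h3⟩
    exact ⟨h1.symm, h2.imp Eq.symm (fun h => G.adj_symm h), h3.imp Eq.symm (fun h => H.adj_symm h)⟩⟩
  loopless := ⟨fun x h => h.1 rfl⟩

/-- The lexicographic product of two simple graphs. -/
def lexProd {α β : Type*} (G : SimpleGraph α) (H : SimpleGraph β) :
    SimpleGraph (α × β) where
  Adj x y := G.Adj x.1 y.1 ∨ (x.1 = y.1 ∧ H.Adj x.2 y.2)
  symm := ⟨by
    rintro x y (h | ⟨h1, h2⟩)
    · exact Or.inl h.symm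
    · exact Or.inr ⟨h1.symm, h2.symm⟩⟩
  loopless := ⟨by
    rintro x (h | ⟨h1, h2⟩)
    · exact G.loopless.irrefl _ h
    · exact H.loopless.irrefl _ h2⟩

/-- The corona `G ∘ H`: one copy of `G` and, for each vertex `a` of `G`, a copy of `H`
all of whose vertices are joined to `a`. -/
def corona {α β : Type*} (G : SimpleGraph α) (H : SimpleGraph β) :
    SimpleGraph (α ⊕ α × β) where
  Adj x y :=
    match x, y with
    | .inl a, .inl a' => G.Adj a a'
    | .inl a, .inr p => a = p.1
    | .inr p, .inl a' => p.1 = a'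
    | .inr p, .inr q => p.1 = q.1 ∧ H.Adj p.2 q.2
  symm := ⟨by
    rintro (a | p) (a' | q) h
    · exact G.adj_symm h
    · exact h.symm
    · exact h.symm
    · exact ⟨h.1.symm, H.adj_symm h.2⟩⟩
  loopless := ⟨by
    rintro (a | p) h
    · exact G.loopless.irrefl _ h
    · exact H.loopless.irrefl _ h.2⟩

end ZeroForcing

open SimpleGraph

theorem Set.ncard_compl_diagonal {α : Type*} [Finite α] :
    (Set.diagonal α)ᶜ.ncard = Nat.card α ^ 2 - Nat.card α := by
  have hdiag : (Set.diagonal α).ncard = Nat.card α := by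
    rw [← Set.range_diag, Set.ncard_range_of_injective fun _ _ h => (Prod.ext_iff.1 h).1]
  have hsum := Set.ncard_add_ncard_compl (Set.diagonal α)
  rw [hdiag, Nat.card_prod, ← sq] at hsum
  omega

theorem SimpleGraph.eq_or_eq_or_eq_of_pathGraph_adj {n : ℕ} {v a b c : Fin n}
    (ha : (pathGraph n).Adj v a) (hb : (pathGraph n).Adj v b) (hc : (pathGraph n).Adj v c) :
    a = b ∨ a = c ∨ b = c := by
  simp only [pathGraph_adj, Fin.ext_iff] at *
  omega

namespace ZeroForcing

variable {V α β : Type*}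

-- Forts are usually also required to be nonempty; here that is a separate hypothesis.
def IsFort (G : SimpleGraph V) (W : Set V) : Prop :=
  ∀ ⦃u v⦄, u ∉ W → v ∈ W → G.Adj u v → ∃ w ∈ W, G.Adj u w ∧ w ≠ v

section Forcing

variable {G : SimpleGraph V} {S W : Set V}

theorem step_compl_eq_self_iff : step G Wᶜ = Wᶜ ↔ IsFort G W := by
  simp only [step, Set.union_eq_left, Set.ofPred_subset, Set.mem_compl_iff, not_not, IsFort]
  constructor
  · intro h u v hu hv huv
    by_contra! hno
    exact h v ⟨u, hu, huv, fun w huw hw => hno w hw huw⟩ hv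
  · rintro h v ⟨u, hu, huv, hforce⟩ hv
    obtain ⟨w, hw, huw, hwv⟩ := h hu hv huv
    exact hwv (hforce w huw hw)

theorem IsFort.isFailedSet_compl (hW : IsFort G W) (hne : W.Nonempty) :
    IsFailedSet G Wᶜ := by
  rintro ⟨k, hk⟩
  rw [Function.iterate_fixed (step_compl_eq_self_iff.2 hW)] at hk
  obtain ⟨v, hv⟩ := hne
  exact (hk ▸ Set.mem_univ v : v ∈ Wᶜ) hv

theorem IsFailedSet.exists_isFort [Finite V] (hS : IsFailedSet G S) :
    ∃ W, IsFort G W ∧ W.Nonempty ∧ Disjoint S W := by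
  let chain : ℕ →o Set V := ⟨fun k => (step G)^[k] S, monotone_nat_of_le_succ fun k => by
    rw [Function.iterate_succ_apply']; exact Set.subset_union_left⟩
  obtain ⟨N, hN⟩ := WellFoundedGT.monotone_chain_condition chain
  have hstall : step G ((step G)^[N] S) = (step G)^[N] S := by
    rw [← Function.iterate_succ_apply' (step G)]; exact (hN (N + 1) N.le_succ).symm
  refine ⟨((step G)^[N] S)ᶜ, step_compl_eq_self_iff.1 (by rwa [compl_compl]),
    Set.nonempty_compl.2 fun h => hS ⟨N, h⟩, Set.disjoint_compl_right_iff_subset.2 ?_⟩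
  exact chain.mono (Nat.zero_le N)

theorem IsFailedSet.ncard_add_le [Finite V] {k : ℕ} (hS : IsFailedSet G S)
    (hk : ∀ W, IsFort G W → W.Nonempty → k ≤ W.ncard) : S.ncard + k ≤ Nat.card V := by
  obtain ⟨W, hW, hne, hSW⟩ := hS.exists_isFort
  calc S.ncard + k ≤ S.ncard + W.ncard := Nat.add_le_add_left (hk W hW hne) _
    _ = (S ∪ W).ncard := (Set.ncard_union_eq hSW).symm
    _ ≤ Nat.card V := Set.ncard_le_card _

end Forcing

section Path

variable {n : ℕ} {A : Set (Fin n)}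

theorem IsFort.eq_empty_of_adj_of_notMem (hA : IsFort (pathGraph n) A) {b c : Fin n}
    (hbc : (pathGraph n).Adj b c) (hb : b ∉ A) (hc : c ∉ A) : A = ∅ := by
  -- a vertex outside `A` with a neighbour outside `A` has at most one other neighbour, which the
  -- fort rule then keeps outside `A` too: adjacent pairs outside `A` spread along the path
  let X := {v | v ∉ A ∧ ∃ w, (pathGraph n).Adj v w ∧ w ∉ A}
  have hclosed : ∀ ⦃v w⦄, (pathGraph n).Adj v w → v ∈ X → w ∈ X := by
    rintro v w hvw ⟨hv, v', hvv', hv'⟩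
    have hw : w ∉ A := fun hw => by
      obtain ⟨u, hu, hvu, huw⟩ := hA hv hw hvw
      rcases eq_or_eq_or_eq_of_pathGraph_adj hvw hvu hvv' with h | h | h
      · exact huw h.symm
      · exact hv' (h ▸ hw)
      · exact hv' (h ▸ hu)
    exact ⟨hw, v, hvw.symm, hv⟩
  have hX : ∀ v, v ∈ X := fun v => by
    induction (reachable_iff_reflTransGen b v).1 (pathGraph_preconnected n b v) with
    | refl => exact ⟨hb, c, hbc, hc⟩
    | tail _ hadj ih => exact hclosed hadj ih
  exact Set.eq_empty_of_forall_notMem fun v => (hX v).1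

theorem IsFort.mem_of_adj_of_notMem (hA : IsFort (pathGraph n) A) (hne : A.Nonempty)
    {b c : Fin n} (hbc : (pathGraph n).Adj b c) (hb : b ∉ A) : c ∈ A :=
  by_contra fun hc => hne.ne_empty (hA.eq_empty_of_adj_of_notMem hbc hb hc)

theorem IsFort.exists_neighbors_of_notMem (hn : 2 ≤ n) (hA : IsFort (pathGraph n) A)
    (hne : A.Nonempty) {b : Fin n} (hb : b ∉ A) :
    ∃ c ∈ A, ∃ d ∈ A, c.val + 1 = b.val ∧ b.val + 1 = d.val := by
  obtain ⟨c, hbc⟩ : ∃ c, (pathGraph n).Adj b c := by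
    by_cases h : b.val + 1 < n
    · exact ⟨⟨b.val + 1, h⟩, pathGraph_adj.2 (Or.inl rfl)⟩
    · exact ⟨⟨b.val - 1, by omega⟩, pathGraph_adj.2 (Or.inr (by simp only; omega))⟩
  have hc := hA.mem_of_adj_of_notMem hne hbc hb
  obtain ⟨d, hd, hbd, hdc⟩ := hA hb hc hbc
  have hcd : c.val + 1 = b.val ∧ b.val + 1 = d.val ∨ d.val + 1 = b.val ∧ b.val + 1 = c.val := by
    simp only [pathGraph_adj, ne_eq, Fin.ext_iff] at hbc hbd hdc
    omega
  rcases hcd with h | h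
  exacts [⟨c, hc, d, hd, h⟩, ⟨d, hd, c, hc, h⟩]

theorem IsFort.le_two_mul_ncard (hn : 2 ≤ n) (hA : IsFort (pathGraph n) A)
    (hne : A.Nonempty) : n ≤ 2 * A.ncard := by
  -- `b ↦ b + 1` injects the complement of `A` into `A`
  have hcompl : Aᶜ.ncard ≤ A.ncard := by
    rw [← Set.ncard_image_of_injective A Fin.val_injective]
    refine Set.ncard_le_ncard_of_injOn (fun b : Fin n => b.val + 1) (fun b hb => ?_)
      (fun b _ b' _ h => Fin.ext (by simpa using h))
    obtain ⟨-, -, d, hd, -, hbd⟩ := hA.exists_neighbors_of_notMem hn hne hb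
    exact ⟨d, hd, hbd.symm⟩
  have hsum := Set.ncard_add_ncard_compl A
  simp only [Nat.card_eq_fintype_card, Fintype.card_fin] at hsum
  omega

end Path

section BoxProd

variable {G : SimpleGraph α} {H : SimpleGraph β} {W : Set (α × β)}

theorem IsFort.image_fst_boxProd (hW : IsFort (G □ H) W) : IsFort G (Prod.fst '' W) := by
  rintro r' - hr' ⟨⟨r, c⟩, hv, rfl⟩ hadj
  have hu : (r', c) ∉ W := fun hu => hr' ⟨_, hu, rfl⟩
  obtain ⟨⟨r'', c'⟩, hw, huw, hwv⟩ := hW hu hv (boxProd_adj_left.2 hadj)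
  rcases boxProd_adj.1 huw with ⟨hr'r'', rfl⟩ | ⟨-, rfl⟩
  · exact ⟨r'', ⟨_, hw, rfl⟩, hr'r'', fun h => hwv (h ▸ rfl)⟩
  · exact absurd ⟨_, hw, rfl⟩ hr'

theorem IsFort.image_snd_boxProd (hW : IsFort (G □ H) W) {I : Set α}
    (hI : ∀ p ∈ W, ∀ r ∈ I, G.Adj r p.1 → p.1 ∈ I) :
    IsFort H (Prod.snd '' (W ∩ Prod.fst ⁻¹' I)) := by
  rintro c' - hc' ⟨⟨r, c⟩, ⟨hv, hr⟩, rfl⟩ hadj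
  have hu : (r, c') ∉ W := fun hu => hc' ⟨_, ⟨hu, hr⟩, rfl⟩
  obtain ⟨⟨r', c''⟩, hw, huw, hwv⟩ := hW hu hv (boxProd_adj_right.2 hadj)
  rcases boxProd_adj.1 huw with ⟨hrr', rfl⟩ | ⟨hc'c'', rfl⟩
  · exact absurd ⟨_, ⟨hw, hI _ hw r hr hrr'⟩, rfl⟩ hc'
  · exact ⟨c'', ⟨_, ⟨hw, hr⟩, rfl⟩, hc'c'', fun h => hwv (h ▸ rfl)⟩

theorem isFort_diagonal (G : SimpleGraph α) : IsFort (G □ G) (Set.diagonal α) := by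
  rintro ⟨a, b⟩ ⟨c, c'⟩ hu (rfl : c = c') hadj
  rcases boxProd_adj.1 hadj with ⟨hac, rfl⟩ | ⟨hbc, rfl⟩
  · exact ⟨(a, a), rfl, boxProd_adj_right.2 hac.symm, fun h => hac.ne (Prod.ext_iff.1 h).1⟩
  · exact ⟨(b, b), rfl, boxProd_adj_left.2 hbc.symm, fun h => hbc.ne (Prod.ext_iff.1 h).1⟩

end BoxProd

section Grid

variable {n : ℕ} {W : Set (Fin n × Fin n)}

theorem IsFort.le_two_mul_ncard_inter_fst_preimage (hn : 2 ≤ n)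
    (hW : IsFort (pathGraph n □ pathGraph n) W) {I : Set (Fin n)}
    (hI : ∀ p ∈ W, ∀ r ∈ I, (pathGraph n).Adj r p.1 → p.1 ∈ I)
    (hne : (W ∩ Prod.fst ⁻¹' I).Nonempty) : n ≤ 2 * (W ∩ Prod.fst ⁻¹' I).ncard :=
  calc n ≤ 2 * (Prod.snd '' (W ∩ Prod.fst ⁻¹' I)).ncard :=
        (hW.image_snd_boxProd hI).le_two_mul_ncard hn (hne.image _)
    _ ≤ 2 * (W ∩ Prod.fst ⁻¹' I).ncard := Nat.mul_le_mul_left _ (Set.ncard_image_le)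

theorem IsFort.le_ncard_boxProd_pathGraph (hn : 2 ≤ n)
    (hW : IsFort (pathGraph n □ pathGraph n) W) (hne : W.Nonempty) : n ≤ W.ncard := by
  by_cases hall : Prod.fst '' W = Set.univ
  · calc n = (Prod.fst '' W).ncard := by simp [hall]
      _ ≤ W.ncard := Set.ncard_image_le
  -- an empty row `a` separates the nonempty parts of `W` above and below it
  obtain ⟨a, ha⟩ := (Set.ne_univ_iff_exists_notMem _).1 hall
  have hclosed : ∀ {I : Set (Fin n)}, (∀ r ∈ I, ∀ s, (pathGraph n).Adj r s → s = a ∨ s ∈ I) →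
      ∀ x ∈ W, ∀ r ∈ I, (pathGraph n).Adj r x.1 → x.1 ∈ I :=
    fun hI x hx r hr hadj => (hI r hr _ hadj).resolve_left fun h => ha ⟨x, hx, h⟩
  obtain ⟨-, ⟨p, hp, rfl⟩, -, ⟨q, hq, rfl⟩, hpa, haq⟩ :=
    hW.image_fst_boxProd.exists_neighbors_of_notMem hn (hne.image _) ha
  have hbelow := hW.le_two_mul_ncard_inter_fst_preimage hn (I := Set.Iio a)
    (hclosed fun r hr s hrs => by
      simp only [Set.mem_Iio, pathGraph_adj, Fin.ext_iff, Fin.lt_def] at hr hrs ⊢; omega)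
    ⟨p, hp, show p.1 < a by rw [Fin.lt_def]; omega⟩
  have habove := hW.le_two_mul_ncard_inter_fst_preimage hn (I := Set.Ioi a)
    (hclosed fun r hr s hrs => by
      simp only [Set.mem_Ioi, pathGraph_adj, Fin.ext_iff, Fin.lt_def] at hr hrs ⊢; omega)
    ⟨q, hq, show a < q.1 by rw [Fin.lt_def]; omega⟩
  calc n ≤ (W ∩ Prod.fst ⁻¹' Set.Iio a).ncard + (W ∩ Prod.fst ⁻¹' Set.Ioi a).ncard := by omega
    _ = (W ∩ Prod.fst ⁻¹' Set.Iio a ∪ W ∩ Prod.fst ⁻¹' Set.Ioi a).ncard :=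
      (Set.ncard_union_eq (Set.disjoint_left.2 fun x hx hx' =>
        lt_asymm (show x.1 < a from hx.2) (show a < x.1 from hx'.2))).symm
    _ ≤ W.ncard :=
      Set.ncard_le_ncard (Set.union_subset Set.inter_subset_left Set.inter_subset_left)

end Grid

end ZeroForcing

theorem failed_zf_grid (n : ℕ) (hn : 2 ≤ n) :
    ZeroForcing.F ((SimpleGraph.pathGraph n).boxProd (SimpleGraph.pathGraph n)) = n ^ 2 - n := by
  refine IsGreatest.csSup_eq ⟨⟨(Set.diagonal _)ᶜ,
    by simpa using Set.ncard_compl_diagonal (α := Fin n),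
    (ZeroForcing.isFort_diagonal _).isFailedSet_compl ⟨(⟨0, by omega⟩, ⟨0, by omega⟩), rfl⟩⟩, ?_⟩
  rintro k ⟨S, rfl, hS⟩
  have hbound := hS.ncard_add_le fun W hW hne => hW.le_ncard_boxProd_pathGraph hn hne
  rw [Nat.card_prod, Nat.card_fin, ← sq] at hbound
  omega
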